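/- arXiv:1201.6138 — 11 statements merged into one kernel-verified Lean document; each statement's English description precedes it below -/
import Mathlib

section
/- For a convex function f : [a,b] → ℝ with a < b, the midpoint estimate is stronger than the trapezoid estimate in the Hermite–Hadamard inequality: (1/(b-a))∫_a^b f(x) dx − f((a+b)/2) ≤ (f(a)+f(b))/2 − (1/(b-a))∫_a^b f(x) dx. (Bullen's inequality.) -/
/-!
Bullen's inequality rearranges to `4 ∫_a^b f ≤ (b - a) (f a + 2 f m + f b)` with `m = (a + b) / 2`,
which is the trapezoid bound `2 ∫_a^b f ≤ (b - a) (f a + f b)` applied to the two halves `[a, m]`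
and `[m, b]`. The trapezoid bound follows by integrating `f x + f (a + b - x) ≤ f a + f b`, the sum
of the convexity inequalities at the two points of `[a, b]` symmetric about its midpoint.
-/

open MeasureTheory Set

theorem ConvexOn.map_add_map_swap_le {𝕜 E β : Type*} [Semiring 𝕜] [PartialOrder 𝕜]
    [AddCommMonoid E] [SMul 𝕜 E] [AddCommMonoid β] [PartialOrder β] [IsOrderedAddMonoid β]
    [Module 𝕜 β] {s : Set E} {f : E → β} (hf : ConvexOn 𝕜 s f) {x y : E} (hx : x ∈ s) (hy : y ∈ s)
    {a b : 𝕜} (ha : 0 ≤ a) (hb : 0 ≤ b) (hab : a + b = 1) :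
    f (a • x + b • y) + f (b • x + a • y) ≤ f x + f y :=
  (add_le_add (hf.2 hx hy ha hb hab) (hf.2 hx hy hb ha ((add_comm b a).trans hab))).trans_eq <| by
    rw [add_add_add_comm, ← add_smul, ← add_smul, add_comm b a, hab, one_smul, one_smul]

theorem ConvexOn.map_add_map_reflect_le {f : ℝ → ℝ} {a b x : ℝ} (hf : ConvexOn ℝ (Icc a b) f)
    (hx : x ∈ Icc a b) : f x + f (a + b - x) ≤ f a + f b := by
  have hab : a ≤ b := (mem_Icc.1 hx).1.trans (mem_Icc.1 hx).2
  rw [← segment_eq_Icc hab] at hx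
  obtain ⟨s, t, hs, ht, hst, rfl⟩ := hx
  have hreflect : a + b - (s • a + t • b) = t • a + s • b := by
    simp only [smul_eq_mul]
    linear_combination (a + b) * hst.symm
  rw [hreflect]
  exact hf.map_add_map_swap_le (left_mem_Icc.2 hab) (right_mem_Icc.2 hab) hs ht hst

theorem ConvexOn.two_mul_integral_le {f : ℝ → ℝ} {a b : ℝ} (hf : ConvexOn ℝ (Icc a b) f)
    (hint : IntegrableOn f (Icc a b)) (hab : a ≤ b) :
    2 * ∫ x in a..b, f x ≤ (b - a) * (f a + f b) := by
  have hI : IntervalIntegrable f volume a b :=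
    (intervalIntegrable_iff_integrableOn_Icc_of_le hab).2 hint
  have hIreflect : IntervalIntegrable (fun x => f (a + b - x)) volume a b := by
    simpa using (hI.comp_sub_left (a + b)).symm
  have hreflect : ∫ x in a..b, f (a + b - x) = ∫ x in a..b, f x := by
    simp [intervalIntegral.integral_comp_sub_left]
  calc 2 * ∫ x in a..b, f x = ∫ x in a..b, (f x + f (a + b - x)) := by
        rw [intervalIntegral.integral_add hI hIreflect, hreflect, two_mul]
    _ ≤ ∫ _ in a..b, (f a + f b) :=
        intervalIntegral.integral_mono_on hab (hI.add hIreflect) intervalIntegrable_const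
          fun x hx => hf.map_add_map_reflect_le hx
    _ = (b - a) * (f a + f b) := by simp [mul_add]

theorem ConvexOn.four_mul_integral_le {f : ℝ → ℝ} {a b : ℝ} (hf : ConvexOn ℝ (Icc a b) f)
    (hint : IntegrableOn f (Icc a b)) (hab : a ≤ b) :
    4 * ∫ x in a..b, f x ≤ (b - a) * (f a + 2 * f ((a + b) / 2) + f b) := by
  generalize hm : (a + b) / 2 = m
  have ham : a ≤ m := by linarith
  have hmb : m ≤ b := by linarith
  have hintl := hint.mono_set (Icc_subset_Icc_right hmb)
  have hintr := hint.mono_set (Icc_subset_Icc_left ham)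
  have hleft :=
    (hf.subset (Icc_subset_Icc_right hmb) (convex_Icc a m)).two_mul_integral_le hintl ham
  have hright :=
    (hf.subset (Icc_subset_Icc_left ham) (convex_Icc m b)).two_mul_integral_le hintr hmb
  rw [show m - a = (b - a) / 2 by linarith] at hleft
  rw [show b - m = (b - a) / 2 by linarith] at hright
  rw [← intervalIntegral.integral_add_adjacent_intervals
    ((intervalIntegrable_iff_integrableOn_Icc_of_le ham).2 hintl)
    ((intervalIntegrable_iff_integrableOn_Icc_of_le hmb).2 hintr)]
  linarith

theorem bullen_inequality (f : ℝ → ℝ) (a b : ℝ) (hab : a < b)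
    (hconv : ConvexOn ℝ (Set.Icc a b) f)
    (hint : IntegrableOn f (Set.Icc a b)) :
    (1 / (b - a)) * ∫ x in a..b, f x - f ((a + b) / 2) ≤
      (f a + f b) / 2 - (1 / (b - a)) * ∫ x in a..b, f x := by
  have hhalves := hconv.four_mul_integral_le hint hab.le
  -- `∫` extends to the end of the left-hand side: its integrand is `f x - f ((a + b) / 2)`.
  rw [intervalIntegral.integral_sub ((intervalIntegrable_iff_integrableOn_Icc_of_le hab.le).2 hint)
    intervalIntegrable_const, intervalIntegral.integral_const, smul_eq_mul, ← sub_nonneg]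
  have hba : 0 < b - a := sub_pos.2 hab
  field_simp
  linarith
end

section
/- For a convex function f : [a,b] → ℝ with a < b, (2/(b-a))∫_a^b f(x) dx ≤ (1/2)[f(a) + f(b) + 2 f((a+b)/2)]. -/
/-
Apply the trapezoid half of the Hermite–Hadamard inequality to each half of `[a, b]`: a convex
function lies below its chord, so its integral over an interval is at most the trapezoid
`(b - a) (f a + f b) / 2`. Adding the bounds for `[a, m]` and `[m, b]`, with `m` the midpoint,
gives `∫ f ≤ (b - a) (f a + f b + 2 f m) / 4`.
-/

open MeasureTheory

theorem ConvexOn.mul_le_chord {f : ℝ → ℝ} {s : Set ℝ} {a b x : ℝ} (hf : ConvexOn ℝ s f)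
    (ha : a ∈ s) (hb : b ∈ s) (hx : x ∈ Set.Icc a b) :
    (b - a) * f x ≤ (b - x) * f a + (x - a) * f b := by
  obtain ⟨hax, hxb⟩ := hx
  rcases hax.eq_or_lt with rfl | hax
  · simp
  rcases hxb.eq_or_lt with rfl | hxb
  · simp
  exact hf.secant_mono_aux1 ha hb hax hxb

theorem integral_chord (a b c d : ℝ) :
    ∫ x in a..b, ((b - x) * c + (x - a) * d) = (b - a) ^ 2 / 2 * (c + d) := by
  have h_affine :
      (fun x => (b - x) * c + (x - a) * d) = fun x => (d - c) * x + (b * c - a * d) := by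
    funext x; ring
  rw [h_affine, intervalIntegral.integral_add (Continuous.intervalIntegrable (by fun_prop) _ _)
    intervalIntegrable_const, intervalIntegral.integral_const_mul, integral_id,
    intervalIntegral.integral_const, smul_eq_mul]
  ring

theorem ConvexOn.integral_le_trapezoid {f : ℝ → ℝ} {a b : ℝ} (hab : a ≤ b)
    (hf : ConvexOn ℝ (Set.Icc a b) f) (hint : IntervalIntegrable f volume a b) :
    ∫ x in a..b, f x ≤ (b - a) * (f a + f b) / 2 := by
  rcases hab.eq_or_lt with rfl | hab
  · simp
  have h_scaled : (b - a) * ∫ x in a..b, f x ≤ (b - a) * ((b - a) * (f a + f b) / 2) := by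
    rw [← intervalIntegral.integral_const_mul]
    calc ∫ x in a..b, (b - a) * f x
        ≤ ∫ x in a..b, ((b - x) * f a + (x - a) * f b) :=
          intervalIntegral.integral_mono_on hab.le (hint.const_mul _)
            (Continuous.intervalIntegrable (by fun_prop) _ _)
            fun x hx => hf.mul_le_chord (Set.left_mem_Icc.2 hab.le) (Set.right_mem_Icc.2 hab.le) hx
      _ = (b - a) * ((b - a) * (f a + f b) / 2) := by rw [integral_chord]; ring
  exact le_of_mul_le_mul_left h_scaled (sub_pos.2 hab)

theorem bullen_inequality_alt (f : ℝ → ℝ) (a b : ℝ) (hab : a < b)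
    (hconv : ConvexOn ℝ (Set.Icc a b) f)
    (hint : IntegrableOn f (Set.Icc a b)) :
    (2 / (b - a)) * ∫ x in a..b, f x ≤
      (1 / 2) * (f a + f b + 2 * f ((a + b) / 2)) := by
  set m := (a + b) / 2 with hm
  have ham : a ≤ m := by linarith
  have hmb : m ≤ b := by linarith
  have hsub_left : Set.Icc a m ⊆ Set.Icc a b := Set.Icc_subset_Icc le_rfl hmb
  have hsub_right : Set.Icc m b ⊆ Set.Icc a b := Set.Icc_subset_Icc ham le_rfl
  have hint_left : IntervalIntegrable f volume a m :=
    (intervalIntegrable_iff_integrableOn_Icc_of_le ham).2 (hint.mono_set hsub_left)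
  have hint_right : IntervalIntegrable f volume m b :=
    (intervalIntegrable_iff_integrableOn_Icc_of_le hmb).2 (hint.mono_set hsub_right)
  have h_left := (hconv.subset hsub_left (convex_Icc a m)).integral_le_trapezoid ham hint_left
  have h_right := (hconv.subset hsub_right (convex_Icc m b)).integral_le_trapezoid hmb hint_right
  have h_total : ∫ x in a..b, f x ≤ (b - a) * (f a + f b + 2 * f m) / 4 := by
    rw [← intervalIntegral.integral_add_adjacent_intervals hint_left hint_right]
    calc _ ≤ (m - a) * (f a + f m) / 2 + (b - m) * (f m + f b) / 2 := add_le_add h_left h_right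
      _ = (b - a) * (f a + f b + 2 * f m) / 4 := by rw [hm]; ring
  rw [div_mul_eq_mul_div, div_le_iff₀ (sub_pos.2 hab)]
  linarith
end

section
/- If f is (h-s)₂-convex in the second sense with s = 1 (i.e. h-convex), then (1/(b-a))∫_a^b f(x) dx ≤ [f(a)+f(b)] ∫_0^1 h(t) dt. -/
open MeasureTheory

/-! Substituting `x = t * b + (1 - t) * a` turns the mean value of `f` over `[a, b]` into
`∫₀¹ f (t * b + (1 - t) * a) dt`. Integrating the `h`-convexity bound
`f (t * b + (1 - t) * a) ≤ h t * f b + h (1 - t) * f a` over `t ∈ [0, 1]`, and using the symmetry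
`∫₀¹ h (1 - t) dt = ∫₀¹ h t dt`, bounds it by `(f a + f b) * ∫₀¹ h`. -/

/-- Varošanec's `h`-convexity; `h = id` gives ordinary convexity. -/
def IsHConvexOn (h : ℝ → ℝ) (s : Set ℝ) (f : ℝ → ℝ) : Prop :=
  ∀ x ∈ s, ∀ y ∈ s, ∀ t ∈ Set.Icc (0:ℝ) 1, f (t * x + (1 - t) * y) ≤ h t * f x + h (1 - t) * f y

section Substitution

variable {E : Type*} [NormedAddCommGroup E] {f : ℝ → E} {a b : ℝ}

theorem IntervalIntegrable.comp_convex_comb (hf : IntervalIntegrable f volume a b) (hab : a ≠ b) :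
    IntervalIntegrable (fun t => f (t * b + (1 - t) * a)) volume 0 1 := by
  have hba : b - a ≠ 0 := sub_ne_zero.2 hab.symm
  have hsub : ∀ t : ℝ, t * b + (1 - t) * a = (b - a) * (t + a / (b - a)) := fun t => by
    field_simp; ring
  simpa [hsub, hba, div_sub_div_same] using
    (hf.comp_mul_left (c := b - a)).comp_add_right (a / (b - a))

variable [NormedSpace ℝ E]

theorem intervalIntegral.integral_zero_one_comp_one_sub (f : ℝ → E) :
    ∫ t in (0:ℝ)..1, f (1 - t) = ∫ t in (0:ℝ)..1, f t := by
  simp [intervalIntegral.integral_comp_sub_left]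

theorem intervalIntegral.integral_zero_one_comp_convex_comb (f : ℝ → E) (hab : a ≠ b) :
    ∫ t in (0:ℝ)..1, f (t * b + (1 - t) * a) = (b - a)⁻¹ • ∫ x in a..b, f x := by
  have hba : b - a ≠ 0 := sub_ne_zero.2 hab.symm
  have hsub : ∀ t : ℝ, t * b + (1 - t) * a = (b - a) * t + a := fun t => by ring
  simp only [hsub, intervalIntegral.integral_comp_mul_add f hba, mul_zero, zero_add, mul_one,
    sub_add_cancel]

end Substitution

theorem IsHConvexOn.inv_sub_mul_integral_le {h f : ℝ → ℝ} {s : Set ℝ} {a b : ℝ}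
    (hconv : IsHConvexOn h s f) (ha : a ∈ s) (hb : b ∈ s) (hab : a ≠ b)
    (hf : IntervalIntegrable f volume a b) (hh : IntervalIntegrable h volume 0 1) :
    (b - a)⁻¹ * ∫ x in a..b, f x ≤ (f a + f b) * ∫ t in (0:ℝ)..1, h t := by
  have hh' : IntervalIntegrable (fun t => h (1 - t)) volume 0 1 := by
    simpa using (hh.comp_sub_left 1).symm
  calc (b - a)⁻¹ * ∫ x in a..b, f x = ∫ t in (0:ℝ)..1, f (t * b + (1 - t) * a) :=
        (intervalIntegral.integral_zero_one_comp_convex_comb f hab).symm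
    _ ≤ ∫ t in (0:ℝ)..1, (h t * f b + h (1 - t) * f a) :=
        intervalIntegral.integral_mono_on zero_le_one (hf.comp_convex_comb hab)
          ((hh.mul_const _).add (hh'.mul_const _)) fun t ht => hconv b hb a ha t ht
    _ = (f a + f b) * ∫ t in (0:ℝ)..1, h t := by
        rw [intervalIntegral.integral_add (hh.mul_const _) (hh'.mul_const _),
          intervalIntegral.integral_mul_const, intervalIntegral.integral_mul_const,
          intervalIntegral.integral_zero_one_comp_one_sub]
        ring

theorem h_convex_hadamard_general (h : ℝ → ℝ) (f : ℝ → ℝ) (a b : ℝ)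
    (hconv : ∀ x ∈ Set.Ici (0:ℝ), ∀ y ∈ Set.Ici (0:ℝ), ∀ t ∈ Set.Icc (0:ℝ) 1,
      f (t * x + (1 - t) * y) ≤ h t * f x + h (1 - t) * f y)
    (ha : 0 ≤ a) (hab : a < b)
    (hfint : IntegrableOn f (Set.Icc a b))
    (hhint : IntegrableOn h (Set.Icc (0:ℝ) 1)) :
    (1 / (b - a)) * ∫ x in a..b, f x ≤ (f a + f b) * ∫ t in (0:ℝ)..1, h t := by
  rw [one_div]
  exact IsHConvexOn.inv_sub_mul_integral_le hconv ha (ha.trans hab.le) hab.ne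
    ((intervalIntegrable_iff_integrableOn_Icc_of_le hab.le).2 hfint)
    ((intervalIntegrable_iff_integrableOn_Icc_of_le zero_le_one).2 hhint)

theorem h_convex_hadamard (h : ℝ → ℝ) (f : ℝ → ℝ) (a b : ℝ)
    (hh : ∀ t ∈ Set.Icc (0:ℝ) 1, 0 ≤ h t)
    (hf : ∀ x ∈ Set.Ici (0:ℝ), 0 ≤ f x)
    (hconv : ∀ x ∈ Set.Ici (0:ℝ), ∀ y ∈ Set.Ici (0:ℝ), ∀ t ∈ Set.Icc (0:ℝ) 1,
      f (t * x + (1 - t) * y) ≤ h t * f x + h (1 - t) * f y)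
    (ha : 0 ≤ a) (hab : a < b)
    (hfint : IntegrableOn f (Set.Icc a b))
    (hhint : IntegrableOn h (Set.Icc (0:ℝ) 1)) :
    (1 / (b - a)) * ∫ x in a..b, f x ≤ (f a + f b) * ∫ t in (0:ℝ)..1, h t :=
  h_convex_hadamard_general h f a b hconv ha hab hfint hhint
end

section
/- If f is (h-s)₂-convex in the second sense and h(1/2) > 0, then (1/(2 h(1/2)^s)) f((a+b)/2) ≤ (1/(b-a)) ∫_a^b f(x) dx ≤ ((f(a)+f(b))/2) ∫_0^1 [h(t)^s + h(1-t)^s] dt. -/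
/-!
Left inequality: the convexity inequality at `t = 1/2` for the pair `x, a + b - x` bounds
`f ((a + b) / 2)` by `h(1/2)^s (f x + f (a + b - x))`; integrate over `[a, b]` and use that the
reflection `x ↦ a + b - x` preserves the integral.

Right inequality: substitute `x = t b + (1 - t) a`, bound the integrand by
`h(t)^s f b + h(1 - t)^s f a` and integrate over `[0, 1]`; the weights `h(t)^s` and `h(1 - t)^s`
have the same integral.
-/

open MeasureTheory intervalIntegral

theorem IntervalIntegrable.comp_add_sub {f : ℝ → ℝ} {a b : ℝ}
    (hf : IntervalIntegrable f volume a b) :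
    IntervalIntegrable (fun x => f (a + b - x)) volume a b := by
  simpa using (hf.comp_sub_left (a + b)).symm

theorem IntervalIntegrable.comp_mul_sub_add {f : ℝ → ℝ} {a b : ℝ} (hab : a ≠ b)
    (hf : IntervalIntegrable f volume a b) :
    IntervalIntegrable (fun t => f ((b - a) * t + a)) volume 0 1 := by
  have := (hf.comp_add_right a).comp_mul_left (c := b - a)
  simpa [div_self (sub_ne_zero.mpr hab.symm)] using this

section HermiteHadamard

variable {f w : ℝ → ℝ} {a b : ℝ}

theorem hermiteHadamard_left_of_midpoint_le (hab : a < b) {c : ℝ} (hc : 0 < c)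
    (hf : IntervalIntegrable f volume a b)
    (hmid : ∀ x ∈ Set.Icc a b, f ((a + b) / 2) ≤ c * (f x + f (a + b - x))) :
    1 / (2 * c) * f ((a + b) / 2) ≤ 1 / (b - a) * ∫ x in a..b, f x := by
  have hint : (b - a) * f ((a + b) / 2) ≤ c * ∫ x in a..b, (f x + f (a + b - x)) := by
    simpa using integral_mono_on hab.le intervalIntegrable_const
      ((hf.add hf.comp_add_sub).const_mul c) hmid
  rw [integral_add hf hf.comp_add_sub] at hint
  simp only [integral_comp_sub_left, add_sub_cancel_left, add_sub_cancel_right] at hint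
  rw [div_mul_eq_mul_div, div_mul_eq_mul_div, div_le_div_iff₀ (by positivity) (by linarith)]
  linarith

theorem hermiteHadamard_right_of_segment_le (hab : a < b)
    (hf : IntervalIntegrable f volume a b) (hw : IntervalIntegrable w volume 0 1)
    (hseg : ∀ t ∈ Set.Icc (0:ℝ) 1, f (t * b + (1 - t) * a) ≤ w t * f b + w (1 - t) * f a) :
    1 / (b - a) * ∫ x in a..b, f x ≤
      (f a + f b) / 2 * ∫ t in (0:ℝ)..1, (w t + w (1 - t)) := by
  have hw' : IntervalIntegrable (fun t => w (1 - t)) volume 0 1 := by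
    simpa using hw.comp_add_sub
  have hrefl : ∫ t in (0:ℝ)..1, w (1 - t) = ∫ t in (0:ℝ)..1, w t := by simp
  have hparam : ∫ x in a..b, f x = (b - a) * ∫ t in (0:ℝ)..1, f ((b - a) * t + a) := by simp
  have hint : ∫ t in (0:ℝ)..1, f ((b - a) * t + a) ≤
      ∫ t in (0:ℝ)..1, (w t * f b + w (1 - t) * f a) := by
    refine integral_mono_on zero_le_one (hf.comp_mul_sub_add hab.ne)
      ((hw.mul_const _).add (hw'.mul_const _)) fun t ht => ?_
    convert hseg t ht using 2
    ring
  rw [integral_add (hw.mul_const _) (hw'.mul_const _), intervalIntegral.integral_mul_const,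
    intervalIntegral.integral_mul_const, hrefl] at hint
  rw [hparam, integral_add hw hw', hrefl, ← mul_assoc, one_div_mul_cancel (by linarith), one_mul]
  linarith

end HermiteHadamard

theorem hs2_convex_hadamard_both_general (h : ℝ → ℝ) (s : ℝ) (f : ℝ → ℝ) (a b : ℝ)
    (hhalf : 0 < h (1/2))
    (hconv : ∀ x ∈ Set.Ici (0:ℝ), ∀ y ∈ Set.Ici (0:ℝ), ∀ t ∈ Set.Icc (0:ℝ) 1,
      f (t * x + (1 - t) * y) ≤ h t ^ s * f x + h (1 - t) ^ s * f y)
    (ha : 0 ≤ a) (hab : a < b)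
    (hfint : IntegrableOn f (Set.Icc a b))
    (hhint : IntegrableOn (fun t => h t ^ s) (Set.Icc (0:ℝ) 1)) :
    (1 / (2 * h (1/2) ^ s)) * f ((a + b) / 2) ≤ (1 / (b - a)) * ∫ x in a..b, f x ∧
    (1 / (b - a)) * ∫ x in a..b, f x ≤
      ((f a + f b) / 2) * ∫ t in (0:ℝ)..1, (h t ^ s + h (1 - t) ^ s) := by
  have hf : IntervalIntegrable f volume a b :=
    (intervalIntegrable_iff_integrableOn_Icc_of_le hab.le).mpr hfint
  have hw : IntervalIntegrable (fun t => h t ^ s) volume 0 1 :=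
    (intervalIntegrable_iff_integrableOn_Icc_of_le zero_le_one).mpr hhint
  constructor
  · refine hermiteHadamard_left_of_midpoint_le hab (Real.rpow_pos_of_pos hhalf s) hf
      fun x hx => ?_
    have hmid := hconv x (ha.trans hx.1) (a + b - x)
      (by simp only [Set.mem_Ici]; linarith [hx.2]) (1/2) (by norm_num)
    rw [show (1:ℝ) - 1/2 = 1/2 by norm_num,
      show 1/2 * x + 1/2 * (a + b - x) = (a + b) / 2 by ring] at hmid
    linarith
  · exact hermiteHadamard_right_of_segment_le hab hf hw
      fun t ht => hconv b (ha.trans hab.le) a ha t ht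

theorem hs2_convex_hadamard_both (h : ℝ → ℝ) (s : ℝ) (f : ℝ → ℝ) (a b : ℝ)
    (hh : ∀ t ∈ Set.Icc (0:ℝ) 1, 0 ≤ h t) (hhalf : 0 < h (1/2))
    (hs : s ∈ Set.Ioc (0:ℝ) 1)
    (hf : ∀ x ∈ Set.Ici (0:ℝ), 0 ≤ f x)
    (hconv : ∀ x ∈ Set.Ici (0:ℝ), ∀ y ∈ Set.Ici (0:ℝ), ∀ t ∈ Set.Icc (0:ℝ) 1,
      f (t * x + (1 - t) * y) ≤ h t ^ s * f x + h (1 - t) ^ s * f y)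
    (ha : 0 ≤ a) (hab : a < b)
    (hfint : IntegrableOn f (Set.Icc a b))
    (hhint : IntegrableOn (fun t => h t ^ s) (Set.Icc (0:ℝ) 1)) :
    (1 / (2 * h (1/2) ^ s)) * f ((a + b) / 2) ≤ (1 / (b - a)) * ∫ x in a..b, f x ∧
    (1 / (b - a)) * ∫ x in a..b, f x ≤
      ((f a + f b) / 2) * ∫ t in (0:ℝ)..1, (h t ^ s + h (1 - t) ^ s) :=
  hs2_convex_hadamard_both_general h s f a b hhalf hconv ha hab hfint hhint
end

section
/- If f : [0,∞) → [0,∞) is s-convex in the second sense (f(tx+(1-t)y) ≤ t^s f(x) + (1-t)^s f(y)) for s ∈ (0,1], then for 0 ≤ a < b: 2^{s-1} f((a+b)/2) ≤ (1/(b-a)) ∫_a^b f(x) dx ≤ (f(a)+f(b))/(s+1). -/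
/-!
The substitution `x = t b + (1 - t) a` turns the mean of `f` over `[a, b]` into an integral over
`[0, 1]`. Integrating the `s`-convexity bound `f (t b + (1 - t) a) ≤ t ^ s f b + (1 - t) ^ s f a`
with `∫₀¹ t ^ s = 1 / (s + 1)` gives the right inequality; integrating the midpoint bound
`f ((a + b) / 2) ≤ 2 ^ (-s) (f x + f y)` for the symmetric pair `x = t b + (1 - t) a`,
`y = t a + (1 - t) b` gives the left one.
-/

open MeasureTheory Set

/-- `f` is `s`-convex in the second sense on `D`. -/
def SConvexOn (s : ℝ) (D : Set ℝ) (f : ℝ → ℝ) : Prop :=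
  ∀ x ∈ D, ∀ y ∈ D, ∀ t ∈ Icc (0:ℝ) 1, f (t * x + (1 - t) * y) ≤ t ^ s * f x + (1 - t) ^ s * f y

theorem SConvexOn.mono {s : ℝ} {D E : Set ℝ} {f : ℝ → ℝ} (hf : SConvexOn s D f) (hED : E ⊆ D) :
    SConvexOn s E f :=
  fun x hx y hy t ht => hf x (hED hx) y (hED hy) t ht

theorem SConvexOn.apply_midpoint_le {s : ℝ} {D : Set ℝ} {f : ℝ → ℝ} (hf : SConvexOn s D f)
    {x y : ℝ} (hx : x ∈ D) (hy : y ∈ D) : f ((x + y) / 2) ≤ (2 ^ s)⁻¹ * (f x + f y) := by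
  have h := hf x hx y hy (1 / 2) ⟨by norm_num, by norm_num⟩
  rw [show (1 - 1 / 2 : ℝ) = 1 / 2 by norm_num, one_div, Real.inv_rpow zero_le_two] at h
  convert h using 2 <;> ring

theorem convexComb_mem_Icc {a b x y t : ℝ} (hx : x ∈ Icc a b) (hy : y ∈ Icc a b)
    (ht : t ∈ Icc (0:ℝ) 1) : t * x + (1 - t) * y ∈ Icc a b :=
  convex_Icc a b hx hy ht.1 (sub_nonneg.mpr ht.2) (add_sub_cancel t 1)

theorem convexComb_eq_mul_add (a b t : ℝ) : t * b + (1 - t) * a = (b - a) * t + a := by ring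

theorem IntervalIntegrable.comp_convexComb {f : ℝ → ℝ} {a b : ℝ} (hab : a ≠ b)
    (hf : IntervalIntegrable f volume a b) :
    IntervalIntegrable (fun t => f (t * b + (1 - t) * a)) volume 0 1 := by
  have hba : b - a ≠ 0 := sub_ne_zero.mpr hab.symm
  have h := (hf.comp_add_right a).comp_mul_left (c := b - a)
  simp only [sub_self, zero_div, div_self hba] at h
  simpa only [convexComb_eq_mul_add] using h

theorem integral_comp_convexComb (f : ℝ → ℝ) {a b : ℝ} (hab : a ≠ b) :
    ∫ t in (0:ℝ)..1, f (t * b + (1 - t) * a) = (b - a)⁻¹ * ∫ x in a..b, f x := by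
  simp only [convexComb_eq_mul_add]
  rw [intervalIntegral.integral_comp_mul_add f (sub_ne_zero.mpr hab.symm) a]
  simp

theorem integral_rpow_zero_one {s : ℝ} (hs : -1 < s) : ∫ t in (0:ℝ)..1, t ^ s = 1 / (s + 1) := by
  rw [integral_rpow (Or.inl hs), Real.zero_rpow (by linarith), Real.one_rpow, sub_zero]

theorem integral_one_sub_rpow_zero_one {s : ℝ} (hs : -1 < s) :
    ∫ t in (0:ℝ)..1, (1 - t) ^ s = 1 / (s + 1) := by
  rw [intervalIntegral.integral_comp_sub_left (fun t => t ^ s) 1, sub_self, sub_zero,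
    integral_rpow_zero_one hs]

theorem SConvexOn.two_rpow_sub_one_mul_le_average {s : ℝ} {f : ℝ → ℝ} {a b : ℝ} (hab : a < b)
    (hf : SConvexOn s (Icc a b) f) (hint : IntervalIntegrable f volume a b) :
    (2:ℝ) ^ (s - 1) * f ((a + b) / 2) ≤ (b - a)⁻¹ * ∫ x in a..b, f x := by
  have ha : a ∈ Icc a b := left_mem_Icc.mpr hab.le
  have hb : b ∈ Icc a b := right_mem_Icc.mpr hab.le
  have hmid : ∀ t ∈ Icc (0:ℝ) 1, f ((a + b) / 2) ≤
      (2 ^ s)⁻¹ * (f (t * b + (1 - t) * a) + f (t * a + (1 - t) * b)) := fun t ht => by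
    convert hf.apply_midpoint_le (convexComb_mem_Icc hb ha ht) (convexComb_mem_Icc ha hb ht)
      using 2
    ring
  have hI₁ := hint.comp_convexComb hab.ne
  have hI₂ := hint.symm.comp_convexComb hab.ne'
  have hswap : ∫ t in (0:ℝ)..1, f (t * a + (1 - t) * b) = (b - a)⁻¹ * ∫ x in a..b, f x := by
    rw [integral_comp_convexComb f hab.ne', intervalIntegral.integral_symm a b, ← neg_sub b a,
      inv_neg, neg_mul_neg]
  have hmono := intervalIntegral.integral_mono_on zero_le_one intervalIntegrable_const
    ((hI₁.add hI₂).const_mul _) hmid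
  rw [intervalIntegral.integral_const, intervalIntegral.integral_const_mul,
    intervalIntegral.integral_add hI₁ hI₂, integral_comp_convexComb f hab.ne, hswap, sub_zero,
    one_smul] at hmono
  set A := (b - a)⁻¹ * ∫ x in a..b, f x
  calc (2:ℝ) ^ (s - 1) * f ((a + b) / 2) ≤ 2 ^ (s - 1) * ((2 ^ s)⁻¹ * (A + A)) := by gcongr
    _ = A := by rw [Real.rpow_sub_one two_ne_zero]; field_simp; ring

theorem SConvexOn.average_le_div_add_one {s : ℝ} {f : ℝ → ℝ} {a b : ℝ} (hs : -1 < s) (hab : a < b)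
    (hf : SConvexOn s (Icc a b) f) (hint : IntervalIntegrable f volume a b) :
    (b - a)⁻¹ * ∫ x in a..b, f x ≤ (f a + f b) / (s + 1) := by
  have hpow : IntervalIntegrable (fun t : ℝ => t ^ s) volume 0 1 :=
    intervalIntegral.intervalIntegrable_rpow' hs
  have hpow' : IntervalIntegrable (fun t : ℝ => (1 - t) ^ s) volume 0 1 := by
    simpa using (hpow.comp_sub_left 1).symm
  have hbound : ∀ t ∈ Icc (0:ℝ) 1, f (t * b + (1 - t) * a) ≤ t ^ s * f b + (1 - t) ^ s * f a :=
    hf b (right_mem_Icc.mpr hab.le) a (left_mem_Icc.mpr hab.le)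
  have hmono := intervalIntegral.integral_mono_on zero_le_one (hint.comp_convexComb hab.ne)
    ((hpow.mul_const _).add (hpow'.mul_const _)) hbound
  rw [integral_comp_convexComb f hab.ne, intervalIntegral.integral_add (hpow.mul_const _)
    (hpow'.mul_const _), intervalIntegral.integral_mul_const, intervalIntegral.integral_mul_const,
    integral_rpow_zero_one hs, integral_one_sub_rpow_zero_one hs] at hmono
  exact hmono.trans_eq (by ring)

theorem s_convex_hadamard_general (s : ℝ) (f : ℝ → ℝ) (a b : ℝ)
    (hs : s ∈ Set.Ioc (0:ℝ) 1)
    (hconv : ∀ x ∈ Set.Ici (0:ℝ), ∀ y ∈ Set.Ici (0:ℝ), ∀ t ∈ Set.Icc (0:ℝ) 1,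
      f (t * x + (1 - t) * y) ≤ t ^ s * f x + (1 - t) ^ s * f y)
    (ha : 0 ≤ a) (hab : a < b)
    (hfint : IntegrableOn f (Set.Icc a b)) :
    (2:ℝ) ^ (s - 1) * f ((a + b) / 2) ≤ (1 / (b - a)) * ∫ x in a..b, f x ∧
    (1 / (b - a)) * ∫ x in a..b, f x ≤ (f a + f b) / (s + 1) := by
  have hsconv : SConvexOn s (Icc a b) f :=
    SConvexOn.mono (D := Ici 0) hconv fun x hx => ha.trans hx.1
  have hint : IntervalIntegrable f volume a b :=
    (intervalIntegrable_iff_integrableOn_Icc_of_le hab.le).mpr hfint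
  rw [one_div]
  exact ⟨hsconv.two_rpow_sub_one_mul_le_average hab hint,
    hsconv.average_le_div_add_one (by linarith [hs.1]) hab hint⟩

theorem s_convex_hadamard (s : ℝ) (f : ℝ → ℝ) (a b : ℝ)
    (hs : s ∈ Set.Ioc (0:ℝ) 1)
    (hf : ∀ x ∈ Set.Ici (0:ℝ), 0 ≤ f x)
    (hconv : ∀ x ∈ Set.Ici (0:ℝ), ∀ y ∈ Set.Ici (0:ℝ), ∀ t ∈ Set.Icc (0:ℝ) 1,
      f (t * x + (1 - t) * y) ≤ t ^ s * f x + (1 - t) ^ s * f y)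
    (ha : 0 ≤ a) (hab : a < b)
    (hfint : IntegrableOn f (Set.Icc a b)) :
    (2:ℝ) ^ (s - 1) * f ((a + b) / 2) ≤ (1 / (b - a)) * ∫ x in a..b, f x ∧
    (1 / (b - a)) * ∫ x in a..b, f x ≤ (f a + f b) / (s + 1) :=
  s_convex_hadamard_general s f a b hs hconv ha hab hfint
end

section
/- If f,g : [a,b] → [0,∞) are convex, then (1/(b-a))∫_a^b f(x)g(x) dx ≤ (1/3)[f(a)g(a)+f(b)g(b)] + (1/6)[f(a)g(b)+f(b)g(a)]. (Pachpatte's inequality.) -/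
/-!
A convex function lies below its chord, so for nonnegative convex `f`, `g` the product `f g` is
bounded on `[a, b]` by the product of the two chords, a quadratic polynomial. Integrating that
polynomial exactly gives the right-hand side.
-/

open MeasureTheory Set

theorem ConvexOn.sub_mul_le_chord {f : ℝ → ℝ} {a b x : ℝ} (hf : ConvexOn ℝ (Icc a b) f)
    (hx : x ∈ Icc a b) : (b - a) * f x ≤ (b - x) * f a + (x - a) * f b := by
  obtain ⟨hax, hxb⟩ := hx
  rcases hax.eq_or_lt with rfl | hax
  · linarith
  rcases hxb.eq_or_lt with rfl | hxb
  · linarith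
  exact hf.secant_mono_aux1 ⟨le_rfl, (hax.trans hxb).le⟩ ⟨(hax.trans hxb).le, le_rfl⟩ hax hxb

theorem integral_affine_mul_affine (a b u₀ u₁ v₀ v₁ : ℝ) :
    ∫ x in a..b, ((b - x) * u₀ + (x - a) * u₁) * ((b - x) * v₀ + (x - a) * v₁) =
      (b - a) ^ 3 * ((u₀ * v₀ + u₁ * v₁) / 3 + (u₀ * v₁ + u₁ * v₀) / 6) := by
  let F : ℝ → ℝ := fun x => (u₁ * v₁ * (x - a) ^ 3 - u₀ * v₀ * (b - x) ^ 3) / 3 +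
    (u₀ * v₁ + u₁ * v₀) * ((x - a) ^ 2 * (b - x) / 2 + (x - a) ^ 3 / 6)
  have hF : ∀ x,
      HasDerivAt F (((b - x) * u₀ + (x - a) * u₁) * ((b - x) * v₀ + (x - a) * v₁)) x := by
    intro x
    have hp : HasDerivAt (fun x => x - a) 1 x := (hasDerivAt_id x).sub_const a
    have hq : HasDerivAt (fun x => b - x) (-1) x := (hasDerivAt_id x).const_sub b
    have hcube := ((hp.fun_pow 3).const_mul (u₁ * v₁)).sub ((hq.fun_pow 3).const_mul (u₀ * v₀))
    have hcross := (((hp.fun_pow 2).mul hq).div_const 2).add ((hp.fun_pow 3).div_const 6)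
    refine ((hcube.div_const 3).add (hcross.const_mul (u₀ * v₁ + u₁ * v₀))).congr_deriv ?_
    norm_num
    ring
  rw [intervalIntegral.integral_eq_sub_of_hasDerivAt (fun x _ => hF x)
    ((by fun_prop : Continuous _).intervalIntegrable a b)]
  simp only [F]
  ring

theorem ConvexOn.mul_le_chord_mul_chord {f g : ℝ → ℝ} {a b x : ℝ} (hf : ConvexOn ℝ (Icc a b) f)
    (hg : ConvexOn ℝ (Icc a b) g) (hfa : 0 ≤ f a) (hfb : 0 ≤ f b) (hgx : 0 ≤ g x)
    (hx : x ∈ Icc a b) :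
    (b - a) ^ 2 * (f x * g x) ≤
      ((b - x) * f a + (x - a) * f b) * ((b - x) * g a + (x - a) * g b) := by
  obtain ⟨hax, hxb⟩ := hx
  calc (b - a) ^ 2 * (f x * g x) = ((b - a) * f x) * ((b - a) * g x) := by ring
    _ ≤ _ := mul_le_mul (hf.sub_mul_le_chord ⟨hax, hxb⟩) (hg.sub_mul_le_chord ⟨hax, hxb⟩)
        (mul_nonneg (by linarith) hgx)
        (add_nonneg (mul_nonneg (by linarith) hfa) (mul_nonneg (by linarith) hfb))

theorem pachpatte_inequality (f g : ℝ → ℝ) (a b : ℝ) (hab : a < b)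
    (hf : ∀ x ∈ Set.Icc a b, 0 ≤ f x)
    (hg : ∀ x ∈ Set.Icc a b, 0 ≤ g x)
    (hconvf : ConvexOn ℝ (Set.Icc a b) f)
    (hconvg : ConvexOn ℝ (Set.Icc a b) g)
    (hfgint : IntegrableOn (fun x => f x * g x) (Set.Icc a b)) :
    (1 / (b - a)) * ∫ x in a..b, f x * g x ≤
      (1 / 3) * (f a * g a + f b * g b) + (1 / 6) * (f a * g b + f b * g a) := by
  have hL : 0 < b - a := sub_pos.mpr hab
  have hbound : ∀ x ∈ Icc a b, f x * g x ≤
      ((b - x) * f a + (x - a) * f b) * ((b - x) * g a + (x - a) * g b) / (b - a) ^ 2 :=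
    fun x hx => by
      rw [le_div_iff₀ (by positivity), mul_comm]
      exact hconvf.mul_le_chord_mul_chord hconvg (hf a (left_mem_Icc.2 hab.le))
        (hf b (right_mem_Icc.2 hab.le)) (hg x hx) hx
  have hmono := intervalIntegral.integral_mono_on hab.le
    ((uIcc_of_le hab.le ▸ hfgint).intervalIntegrable)
    ((by fun_prop : Continuous _).intervalIntegrable a b) hbound
  rw [intervalIntegral.integral_div, integral_affine_mul_affine] at hmono
  rw [one_div, inv_mul_le_iff₀ hL]
  refine hmono.trans_eq ?_
  rw [div_eq_iff (by positivity)]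
  ring
end

section
/- If f is (h-s)₂-convex in the second sense, then (1/(b-a))∫_a^b f(x) dx ≤ [f(a)+f(b)] ∫_0^1 h(t)^s dt. -/
open MeasureTheory

/-!
Substituting `x = t * b + (1 - t) * a` turns the mean of `f` over `[a, b]` into
`∫ t in 0..1, f (t * b + (1 - t) * a)`. The convexity inequality bounds the integrand by
`h t ^ s * f b + h (1 - t) ^ s * f a`, and the reflection `t ↦ 1 - t` shows that both weights have
the same integral over `[0, 1]`.
-/

namespace intervalIntegral

variable {f w : ℝ → ℝ} {a b : ℝ}

theorem intervalIntegrable_comp_lineMap_unit (hf : IntervalIntegrable f volume a b) (hab : a ≠ b) :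
    IntervalIntegrable (fun t => f ((b - a) * t + a)) volume 0 1 := by
  have hshift : IntervalIntegrable (fun x => f (x + a)) volume 0 (b - a) := by
    simpa using hf.comp_add_right a
  simpa [div_self (sub_ne_zero.2 hab.symm)] using hshift.comp_mul_left (c := b - a)

theorem integral_comp_lineMap_unit (f : ℝ → ℝ) (hab : a ≠ b) :
    ∫ t in (0:ℝ)..1, f ((b - a) * t + a) = (b - a)⁻¹ * ∫ x in a..b, f x := by
  rw [integral_comp_mul_add f (sub_ne_zero.2 hab.symm) a]
  simp [smul_eq_mul]

theorem integral_comp_one_sub_unit (w : ℝ → ℝ) :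
    ∫ t in (0:ℝ)..1, w (1 - t) = ∫ t in (0:ℝ)..1, w t := by
  simp [integral_comp_sub_left (a := (0:ℝ)) (b := 1) w 1]

theorem intervalIntegrable_comp_one_sub_unit (hw : IntervalIntegrable w volume 0 1) :
    IntervalIntegrable (fun t => w (1 - t)) volume 0 1 := by
  simpa using (hw.comp_sub_left 1).symm

theorem integral_symm_weight_comb (hw : IntervalIntegrable w volume 0 1) (u v : ℝ) :
    ∫ t in (0:ℝ)..1, (w t * u + w (1 - t) * v) = (u + v) * ∫ t in (0:ℝ)..1, w t := by
  have hw' := intervalIntegrable_comp_one_sub_unit hw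
  rw [integral_add (hw.mul_const _) (hw'.mul_const _), integral_mul_const, integral_mul_const,
    integral_comp_one_sub_unit]
  ring

theorem inv_sub_mul_integral_le_of_le_weight_comb (hab : a < b)
    (hf : IntervalIntegrable f volume a b) (hw : IntervalIntegrable w volume 0 1)
    (hle : ∀ t ∈ Set.Icc (0:ℝ) 1, f (t * b + (1 - t) * a) ≤ w t * f b + w (1 - t) * f a) :
    (1 / (b - a)) * ∫ x in a..b, f x ≤ (f a + f b) * ∫ t in (0:ℝ)..1, w t := by
  have hw' := intervalIntegrable_comp_one_sub_unit hw
  calc (1 / (b - a)) * ∫ x in a..b, f x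
      = ∫ t in (0:ℝ)..1, f ((b - a) * t + a) := by
        rw [integral_comp_lineMap_unit f hab.ne, one_div]
    _ ≤ ∫ t in (0:ℝ)..1, (w t * f b + w (1 - t) * f a) := by
        refine integral_mono_on zero_le_one (intervalIntegrable_comp_lineMap_unit hf hab.ne)
          ((hw.mul_const _).add (hw'.mul_const _)) fun t ht => ?_
        simpa only [show (b - a) * t + a = t * b + (1 - t) * a by ring] using hle t ht
    _ = (f b + f a) * ∫ t in (0:ℝ)..1, w t := integral_symm_weight_comb hw _ _
    _ = (f a + f b) * ∫ t in (0:ℝ)..1, w t := by rw [add_comm]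

end intervalIntegral

theorem hs2_convex_sum_bound_general (h : ℝ → ℝ) (s : ℝ) (f : ℝ → ℝ) (a b : ℝ)
    (hconv : ∀ x ∈ Set.Ici (0:ℝ), ∀ y ∈ Set.Ici (0:ℝ), ∀ t ∈ Set.Icc (0:ℝ) 1,
      f (t * x + (1 - t) * y) ≤ h t ^ s * f x + h (1 - t) ^ s * f y)
    (ha : 0 ≤ a) (hab : a < b)
    (hfint : IntegrableOn f (Set.Icc a b))
    (hhint : IntegrableOn (fun t => h t ^ s) (Set.Icc (0:ℝ) 1)) :
    (1 / (b - a)) * ∫ x in a..b, f x ≤ (f a + f b) * ∫ t in (0:ℝ)..1, h t ^ s :=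
  intervalIntegral.inv_sub_mul_integral_le_of_le_weight_comb hab
    ((intervalIntegrable_iff_integrableOn_Icc_of_le hab.le).mpr hfint)
    ((intervalIntegrable_iff_integrableOn_Icc_of_le zero_le_one).mpr hhint)
    fun t ht => hconv b (ha.trans hab.le) a ha t ht

theorem hs2_convex_sum_bound (h : ℝ → ℝ) (s : ℝ) (f : ℝ → ℝ) (a b : ℝ)
    (hh : ∀ t ∈ Set.Icc (0:ℝ) 1, 0 ≤ h t)
    (hs : s ∈ Set.Ioc (0:ℝ) 1)
    (hf : ∀ x ∈ Set.Ici (0:ℝ), 0 ≤ f x)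
    (hconv : ∀ x ∈ Set.Ici (0:ℝ), ∀ y ∈ Set.Ici (0:ℝ), ∀ t ∈ Set.Icc (0:ℝ) 1,
      f (t * x + (1 - t) * y) ≤ h t ^ s * f x + h (1 - t) ^ s * f y)
    (ha : 0 ≤ a) (hab : a < b)
    (hfint : IntegrableOn f (Set.Icc a b))
    (hhint : IntegrableOn (fun t => h t ^ s) (Set.Icc (0:ℝ) 1)) :
    (1 / (b - a)) * ∫ x in a..b, f x ≤ (f a + f b) * ∫ t in (0:ℝ)..1, h t ^ s :=
  hs2_convex_sum_bound_general h s f a b hconv ha hab hfint hhint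
end

section
/- If f is a P-function (f nonnegative with f(tx+(1-t)y) ≤ f(x)+f(y)), then f((a+b)/2) ≤ (2/(b-a))∫_a^b f(x) dx ≤ 2[f(a)+f(b)]. -/
/-!
Every point of `[a, b]` lies on the segment from `a` to `b`, so the P-function inequality bounds
`f` there by `f a + f b`; integrating gives the right-hand inequality. For the left-hand one,
`(a + b) / 2` is the midpoint of `x` and `a + b - x`, so `f ((a + b) / 2) ≤ f x + f (a + b - x)`,
and integrating over `[a, b]` counts `∫ f` twice because `x ↦ a + b - x` preserves the integral.
-/

open MeasureTheory

def IsPFunctionOn {E : Type*} [AddCommGroup E] [Module ℝ E] (s : Set E) (f : E → ℝ) : Prop :=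
  ∀ x ∈ s, ∀ y ∈ s, ∀ t ∈ Set.Icc (0:ℝ) 1, f (t • x + (1 - t) • y) ≤ f x + f y

namespace IsPFunctionOn

section Module

variable {E : Type*} [AddCommGroup E] [Module ℝ E] {s t : Set E} {f : E → ℝ}

theorem mono (hf : IsPFunctionOn s f) (hts : t ⊆ s) : IsPFunctionOn t f :=
  fun x hx y hy => hf x (hts hx) y (hts hy)

theorem le_add_of_mem_segment (hf : IsPFunctionOn s f) {x y z : E} (hx : x ∈ s) (hy : y ∈ s)
    (hz : z ∈ segment ℝ x y) : f z ≤ f x + f y := by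
  obtain ⟨μ, ν, hμ, hν, hμν, rfl⟩ := hz
  obtain rfl : ν = 1 - μ := by linarith
  exact hf x hx y hy μ ⟨hμ, by linarith⟩

theorem midpoint_le_add (hf : IsPFunctionOn s f) {x y : E} (hx : x ∈ s) (hy : y ∈ s) :
    f (midpoint ℝ x y) ≤ f x + f y :=
  hf.le_add_of_mem_segment hx hy (midpoint_mem_segment x y)

end Module

variable {s : Set ℝ} {f : ℝ → ℝ} {a b : ℝ}

theorem integral_le_mul_add (hf : IsPFunctionOn s f) (ha : a ∈ s) (hb : b ∈ s) (hab : a ≤ b)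
    (hint : IntervalIntegrable f volume a b) :
    ∫ x in a..b, f x ≤ (b - a) * (f a + f b) := by
  have hbound : ∀ x ∈ Set.Icc a b, f x ≤ f a + f b := fun x hx =>
    hf.le_add_of_mem_segment ha hb (by rwa [segment_eq_Icc hab])
  calc ∫ x in a..b, f x ≤ ∫ _ in a..b, (f a + f b) :=
        intervalIntegral.integral_mono_on hab hint intervalIntegrable_const hbound
    _ = (b - a) * (f a + f b) := by rw [intervalIntegral.integral_const, smul_eq_mul]

theorem mul_midpoint_le_two_mul_integral (hf : IsPFunctionOn (Set.Icc a b) f) (hab : a ≤ b)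
    (hint : IntervalIntegrable f volume a b) :
    (b - a) * f ((a + b) / 2) ≤ 2 * ∫ x in a..b, f x := by
  have hreflect : ∫ x in a..b, f (a + b - x) = ∫ x in a..b, f x := by
    rw [intervalIntegral.integral_comp_sub_left]; simp
  have hint' : IntervalIntegrable (fun x => f (a + b - x)) volume a b := by
    simpa using (hint.comp_sub_left (a + b)).symm
  have hbound : ∀ x ∈ Set.Icc a b, f ((a + b) / 2) ≤ f x + f (a + b - x) := by
    intro x hx
    have hmid : midpoint ℝ x (a + b - x) = (a + b) / 2 := by
      rw [midpoint_eq_smul_add, smul_eq_mul, invOf_eq_inv]; ring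
    rw [← hmid]
    exact hf.midpoint_le_add hx ⟨by linarith [hx.2], by linarith [hx.1]⟩
  calc (b - a) * f ((a + b) / 2) = ∫ _ in a..b, f ((a + b) / 2) := by
        rw [intervalIntegral.integral_const, smul_eq_mul]
    _ ≤ ∫ x in a..b, (f x + f (a + b - x)) :=
        intervalIntegral.integral_mono_on hab intervalIntegrable_const (hint.add hint') hbound
    _ = 2 * ∫ x in a..b, f x := by
        rw [intervalIntegral.integral_add hint hint', hreflect, two_mul]

end IsPFunctionOn

theorem p_function_hadamard_general (f : ℝ → ℝ) (I : Set ℝ) (a b : ℝ)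
    (hI : Convex ℝ I)
    (hP : ∀ x ∈ I, ∀ y ∈ I, ∀ t ∈ Set.Icc (0:ℝ) 1,
      f (t * x + (1 - t) * y) ≤ f x + f y)
    (haI : a ∈ I) (hbI : b ∈ I) (hab : a < b)
    (hfint : IntegrableOn f (Set.Icc a b)) :
    f ((a + b) / 2) ≤ (2 / (b - a)) * ∫ x in a..b, f x ∧
    (2 / (b - a)) * ∫ x in a..b, f x ≤ 2 * (f a + f b) := by
  have hPI : IsPFunctionOn I f := hP
  have hint : IntervalIntegrable f volume a b :=
    (intervalIntegrable_iff_integrableOn_Icc_of_le hab.le).2 hfint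
  have hba : 0 < b - a := sub_pos.2 hab
  have hlower := (hPI.mono (hI.ordConnected.out haI hbI)).mul_midpoint_le_two_mul_integral
    hab.le hint
  have hupper := hPI.integral_le_mul_add haI hbI hab.le hint
  constructor
  · rw [div_mul_eq_mul_div, le_div_iff₀ hba]
    linarith
  · rw [div_mul_eq_mul_div, div_le_iff₀ hba]
    linarith

theorem p_function_hadamard (f : ℝ → ℝ) (I : Set ℝ) (a b : ℝ)
    (hI : Convex ℝ I)
    (hf : ∀ x ∈ I, 0 ≤ f x)
    (hP : ∀ x ∈ I, ∀ y ∈ I, ∀ t ∈ Set.Icc (0:ℝ) 1,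
      f (t * x + (1 - t) * y) ≤ f x + f y)
    (haI : a ∈ I) (hbI : b ∈ I) (hab : a < b)
    (hfint : IntegrableOn f (Set.Icc a b)) :
    f ((a + b) / 2) ≤ (2 / (b - a)) * ∫ x in a..b, f x ∧
    (2 / (b - a)) * ∫ x in a..b, f x ≤ 2 * (f a + f b) :=
  p_function_hadamard_general f I a b hI hP haI hbI hab hfint
end

section
/- If f is (h-s)₂-convex in the second sense, then (1/(b-a))∫_a^b f(x) dx ≤ [ (f(a)+f(b))/2 + f((a+b)/2) ] ∫_0^1 h(t)^s dt. -/
/-!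
Split `[a, b]` at its midpoint `m`. On a half `[p, q]`, the substitution `x = (1 - t) p + t q`
and the pointwise convexity bound give `∫ x in p..q, f x ≤ (q - p) (f p + f q) ∫ t in 0..1, h t ^ s`,
because `t ↦ h (1 - t) ^ s` has the same integral over `[0, 1]` as `t ↦ h t ^ s`.
Adding the bounds for `[a, m]` and `[m, b]`, each of length `(b - a) / 2`, gives the claim.
-/

open MeasureTheory

theorem IntervalIntegrable.comp_add_sub_mul {f : ℝ → ℝ} {p q : ℝ}
    (hf : IntervalIntegrable f volume p q) :
    IntervalIntegrable (fun x => f (p + (q - p) * x)) volume 0 1 := by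
  rcases eq_or_ne (q - p) 0 with hpq | hpq
  · simp [hpq]
  · simpa [hpq] using (hf.comp_add_left p).comp_mul_left (c := q - p)

theorem integral_le_sub_mul_integral_of_le_mul_add_mul {f φ : ℝ → ℝ} {p q : ℝ} (hpq : p ≤ q)
    (hbound : ∀ t ∈ Set.Icc (0:ℝ) 1, f (t * p + (1 - t) * q) ≤ φ t * f p + φ (1 - t) * f q)
    (hf : IntervalIntegrable f volume p q) (hφ : IntervalIntegrable φ volume 0 1) :
    ∫ x in p..q, f x ≤ (q - p) * ((f p + f q) * ∫ t in (0:ℝ)..1, φ t) := by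
  have hφ_refl : IntervalIntegrable (fun t => φ (1 - t)) volume 0 1 := by
    simpa using (hφ.comp_sub_left 1).symm
  have hmono : ∫ t in (0:ℝ)..1, f (p + (q - p) * t) ≤
      ∫ t in (0:ℝ)..1, (φ (1 - t) * f p + φ t * f q) := by
    refine intervalIntegral.integral_mono_on zero_le_one hf.comp_add_sub_mul
      ((hφ_refl.mul_const _).add (hφ.mul_const _)) fun t ht => ?_
    have hbound_t := hbound (1 - t) ⟨by linarith [ht.2], by linarith [ht.1]⟩
    rw [sub_sub_cancel] at hbound_t
    convert hbound_t using 2; ring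
  have hrhs : ∫ t in (0:ℝ)..1, (φ (1 - t) * f p + φ t * f q)
      = (f p + f q) * ∫ t in (0:ℝ)..1, φ t := by
    rw [intervalIntegral.integral_add (hφ_refl.mul_const _) (hφ.mul_const _),
      intervalIntegral.integral_mul_const, intervalIntegral.integral_mul_const,
      intervalIntegral.integral_comp_sub_left φ 1, sub_self, sub_zero]
    ring
  calc ∫ x in p..q, f x = (q - p) * ∫ t in (0:ℝ)..1, f (p + (q - p) * t) := by
        rw [← smul_eq_mul, intervalIntegral.smul_integral_comp_add_mul]; simp
    _ ≤ (q - p) * ((f p + f q) * ∫ t in (0:ℝ)..1, φ t) := by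
        rw [← hrhs]; exact mul_le_mul_of_nonneg_left hmono (sub_nonneg.2 hpq)

theorem hs2_convex_bullen_general (h : ℝ → ℝ) (s : ℝ) (f : ℝ → ℝ) (a b : ℝ)
    (hconv : ∀ x ∈ Set.Ici (0:ℝ), ∀ y ∈ Set.Ici (0:ℝ), ∀ t ∈ Set.Icc (0:ℝ) 1,
      f (t * x + (1 - t) * y) ≤ h t ^ s * f x + h (1 - t) ^ s * f y)
    (ha : 0 ≤ a) (hab : a < b)
    (hfint : IntegrableOn f (Set.Icc a b))
    (hhint : IntegrableOn (fun t => h t ^ s) (Set.Icc (0:ℝ) 1)) :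
    (1 / (b - a)) * ∫ x in a..b, f x ≤
      ((f a + f b) / 2 + f ((a + b) / 2)) * ∫ t in (0:ℝ)..1, h t ^ s := by
  set m := (a + b) / 2 with hm
  have ham : a ≤ m := by linarith
  have hmb : m ≤ b := by linarith
  have hf : IntervalIntegrable f volume a b :=
    (intervalIntegrable_iff_integrableOn_Icc_of_le hab.le).2 hfint
  have hφ : IntervalIntegrable (fun t => h t ^ s) volume 0 1 :=
    (intervalIntegrable_iff_integrableOn_Icc_of_le zero_le_one).2 hhint
  have hf_left : IntervalIntegrable f volume a m := hf.mono_set (Set.uIcc_subset_uIcc_left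
    (Set.mem_uIcc_of_le ham hmb))
  have hf_right : IntervalIntegrable f volume m b := hf.mono_set (Set.uIcc_subset_uIcc_right
    (Set.mem_uIcc_of_le ham hmb))
  have h_left := integral_le_sub_mul_integral_of_le_mul_add_mul ham
    (hconv a ha m (ha.trans ham)) hf_left hφ
  have h_right := integral_le_sub_mul_integral_of_le_mul_add_mul hmb
    (hconv m (ha.trans ham) b (ha.trans (ham.trans hmb))) hf_right hφ
  rw [← intervalIntegral.integral_add_adjacent_intervals hf_left hf_right, one_div_mul_eq_div,
    div_le_iff₀ (sub_pos.2 hab)]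
  have hm_sub : m - a = (b - a) / 2 ∧ b - m = (b - a) / 2 := by constructor <;> linarith
  rw [hm_sub.1] at h_left
  rw [hm_sub.2] at h_right
  linarith

theorem hs2_convex_bullen (h : ℝ → ℝ) (s : ℝ) (f : ℝ → ℝ) (a b : ℝ)
    (hh : ∀ t ∈ Set.Icc (0:ℝ) 1, 0 ≤ h t)
    (hs : s ∈ Set.Ioc (0:ℝ) 1)
    (hf : ∀ x ∈ Set.Ici (0:ℝ), 0 ≤ f x)
    (hconv : ∀ x ∈ Set.Ici (0:ℝ), ∀ y ∈ Set.Ici (0:ℝ), ∀ t ∈ Set.Icc (0:ℝ) 1,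
      f (t * x + (1 - t) * y) ≤ h t ^ s * f x + h (1 - t) ^ s * f y)
    (ha : 0 ≤ a) (hab : a < b)
    (hfint : IntegrableOn f (Set.Icc a b))
    (hhint : IntegrableOn (fun t => h t ^ s) (Set.Icc (0:ℝ) 1)) :
    (1 / (b - a)) * ∫ x in a..b, f x ≤
      ((f a + f b) / 2 + f ((a + b) / 2)) * ∫ t in (0:ℝ)..1, h t ^ s :=
  hs2_convex_bullen_general h s f a b hconv ha hab hfint hhint
end

section
/- For 2 < a < b and s ∈ (0,1], given that ln is s-convex in the second sense on [2,∞), one has ln I(a,b) ≤ (1/(s+1)) [ (ln a + ln b)/2 + ln((a+b)/2) ], where ln I(a,b) = (1/(b-a))∫_a^b ln x dx. -/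
open MeasureTheory Real intervalIntegral

lemma seg_bound (s : ℝ) (hs0 : 0 < s) (c d : ℝ) (hc : 2 ≤ c) (hcd : c < d)
    (hconv : ∀ x ∈ Set.Ici (2:ℝ), ∀ y ∈ Set.Ici (2:ℝ), ∀ t ∈ Set.Icc (0:ℝ) 1,
      Real.log (t * x + (1 - t) * y) ≤ t ^ s * Real.log x + (1 - t) ^ s * Real.log y) :
    ∫ x in c..d, Real.log x ≤ (d - c) * ((Real.log c + Real.log d) / (s + 1)) := by
  have hdc : (0:ℝ) < d - c := by linarith
  have hsub : ∫ t in (0:ℝ)..1, Real.log ((d - c) * t + c)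
      = (d - c)⁻¹ • ∫ x in c..d, Real.log x := by
    have := intervalIntegral.integral_comp_mul_add (a := 0) (b := 1)
      (f := Real.log) (c := d - c) (ne_of_gt hdc) c
    simpa using this
  have key : ∫ t in (0:ℝ)..1, Real.log ((d - c) * t + c)
      ≤ (Real.log c + Real.log d) / (s + 1) := by
    have hle : ∀ t ∈ Set.Icc (0:ℝ) 1,
        Real.log ((d - c) * t + c) ≤ t ^ s * Real.log d + (1 - t) ^ s * Real.log c := by
      intro t ht
      have := hconv d (by simp [Set.mem_Ici]; linarith) c (by simpa using hc) t ht
      have harg : t * d + (1 - t) * c = (d - c) * t + c := by ring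
      rwa [harg] at this
    have hint1 : IntervalIntegrable (fun t => Real.log ((d - c) * t + c)) volume 0 1 := by
      apply ContinuousOn.intervalIntegrable
      apply ContinuousOn.log
      · fun_prop
      · intro t ht
        simp only [Set.uIcc_of_le (by norm_num : (0:ℝ) ≤ 1)] at ht
        nlinarith [ht.1, ht.2]
    have hint2 : IntervalIntegrable
        (fun t => t ^ s * Real.log d + (1 - t) ^ s * Real.log c) volume 0 1 := by
      apply IntervalIntegrable.add
      · exact (intervalIntegrable_rpow' (by linarith)).mul_const _
      · have : IntervalIntegrable (fun t : ℝ => (1 - t) ^ s) volume 0 1 := by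
          have h := (intervalIntegrable_rpow' (a := 0) (b := 1) (r := s) (by linarith)).comp_sub_left 1
          simpa using h.symm
        exact this.mul_const _
    have hmono := intervalIntegral.integral_mono_on (by norm_num : (0:ℝ) ≤ 1) hint1 hint2 hle
    have hts : ∫ t in (0:ℝ)..1, t ^ s = 1 / (s + 1) := by
      rw [integral_rpow (Or.inl (by linarith))]
      rw [Real.one_rpow, Real.zero_rpow (by linarith)]
      ring
    have h1ts : ∫ t in (0:ℝ)..1, (1 - t) ^ s = 1 / (s + 1) := by
      have := intervalIntegral.integral_comp_sub_left (a := 0) (b := 1)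
        (fun x : ℝ => x ^ s) 1
      simpa [hts] using this
    have hsplit : ∫ t in (0:ℝ)..1, (t ^ s * Real.log d + (1 - t) ^ s * Real.log c)
        = (Real.log c + Real.log d) / (s + 1) := by
      rw [intervalIntegral.integral_add ((intervalIntegrable_rpow' (by linarith)).mul_const _)
        (by
          have h := (intervalIntegrable_rpow' (a := 0) (b := 1) (r := s) (by linarith)).comp_sub_left 1
          exact (by simpa using h.symm : IntervalIntegrable (fun t : ℝ => (1 - t) ^ s) volume 0 1).mul_const _),
        intervalIntegral.integral_mul_const, intervalIntegral.integral_mul_const, hts, h1ts]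
      ring
    rw [hsplit] at hmono
    exact hmono
  rw [hsub] at key
  have := mul_le_mul_of_nonneg_left key (le_of_lt hdc)
  rw [smul_eq_mul, ← mul_assoc, mul_inv_cancel₀ (ne_of_gt hdc), one_mul] at this
  linarith

theorem identric_bullen_bound (a b s : ℝ)
    (ha : 2 < a) (hab : a < b) (hs : s ∈ Set.Ioc (0:ℝ) 1)
    (hconv : ∀ x ∈ Set.Ici (2:ℝ), ∀ y ∈ Set.Ici (2:ℝ), ∀ t ∈ Set.Icc (0:ℝ) 1,
      Real.log (t * x + (1 - t) * y) ≤ t ^ s * Real.log x + (1 - t) ^ s * Real.log y) :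
    (1 / (b - a)) * ∫ x in a..b, Real.log x ≤
      (1 / (s + 1)) * ((Real.log a + Real.log b) / 2 + Real.log ((a + b) / 2)) := by
  obtain ⟨hs0, hs1⟩ := hs
  set m := (a + b) / 2 with hm
  have ham : a < m := by rw [hm]; linarith
  have hmb : m < b := by rw [hm]; linarith
  have h1 := seg_bound s hs0 a m (le_of_lt ha) ham hconv
  have h2 := seg_bound s hs0 m b (by rw [hm]; linarith) hmb hconv
  have hadd : (∫ x in a..m, Real.log x) + ∫ x in m..b, Real.log x = ∫ x in a..b, Real.log x := by
    apply intervalIntegral.integral_add_adjacent_intervals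
    · apply ContinuousOn.intervalIntegrable
      apply ContinuousOn.log continuousOn_id
      intro x hx
      simp only [Set.uIcc_of_le (le_of_lt ham)] at hx
      intro h; rw [id_eq] at h; rw [h] at hx; linarith [hx.1]
    · apply ContinuousOn.intervalIntegrable
      apply ContinuousOn.log continuousOn_id
      intro x hx
      simp only [Set.uIcc_of_le (le_of_lt hmb)] at hx
      intro h; rw [id_eq] at h; rw [h] at hx; nlinarith [hx.1]
  have hba : (0:ℝ) < b - a := by linarith
  have hs1' : (0:ℝ) < s + 1 := by linarith
  have hma : m - a = (b - a) / 2 := by rw [hm]; ring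
  have hbm : b - m = (b - a) / 2 := by rw [hm]; ring
  have htotal : ∫ x in a..b, Real.log x
      ≤ (b - a) * ((1 / (s + 1)) * ((Real.log a + Real.log b) / 2 + Real.log m)) := by
    rw [← hadd]
    rw [hma] at h1; rw [hbm] at h2
    calc (∫ x in a..m, Real.log x) + ∫ x in m..b, Real.log x
        ≤ (b - a) / 2 * ((Real.log a + Real.log m) / (s + 1))
          + (b - a) / 2 * ((Real.log m + Real.log b) / (s + 1)) := add_le_add h1 h2
      _ = (b - a) * ((1 / (s + 1)) * ((Real.log a + Real.log b) / 2 + Real.log m)) := by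
          field_simp; ring
  rw [div_mul_eq_mul_div, mul_comm, ← div_mul_eq_mul_div, mul_one]
  rw [div_le_iff₀ hba] at *
  linarith [htotal]
end

section
/- If f : [0,∞) → [0,∞) is s-convex in the second sense for s ∈ (0,1] and 0 ≤ a < b, then ∫_0^1 f(ta+(1-t)b) dt = (1/(b-a)) ∫_a^b f(x) dx and hence (1/(b-a))∫_a^b f(x) dx ≤ f(a)/(s+1) + f(b)/(s+1). -/
/-!
The substitution `x = t * a + (1 - t) * b` turns `∫ t in 0..1, f (t * a + (1 - t) * b)` into the
mean value of `f` over `[a, b]`. Integrating the `s`-convexity inequality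
`f (t * a + (1 - t) * b) ≤ t ^ s * f a + (1 - t) ^ s * f b` over `t ∈ [0, 1]`, and using
`∫ t in 0..1, t ^ s = ∫ t in 0..1, (1 - t) ^ s = 1 / (s + 1)`, bounds that mean value.
-/

open MeasureTheory Set

section ConvexCombination

variable {E : Type*} [NormedAddCommGroup E] {f : ℝ → E} {a b : ℝ}

theorem convexCombination_eq_mul_add (t a b : ℝ) : t * a + (1 - t) * b = (a - b) * t + b := by
  ring

theorem intervalIntegral.integral_comp_convexCombination [NormedSpace ℝ E] (f : ℝ → E)
    (hab : a ≠ b) :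
    ∫ t in (0:ℝ)..1, f (t * a + (1 - t) * b) = (b - a)⁻¹ • ∫ x in a..b, f x := by
  simp_rw [convexCombination_eq_mul_add]
  rw [integral_comp_mul_add f (sub_ne_zero.2 hab), integral_symm, smul_neg, ← neg_smul, ← inv_neg,
    neg_sub]
  simp

theorem IntervalIntegrable.comp_convexCombination (hf : IntervalIntegrable f volume a b) :
    IntervalIntegrable (fun t => f (t * a + (1 - t) * b)) volume 0 1 := by
  simp_rw [convexCombination_eq_mul_add]
  rcases eq_or_ne a b with rfl | hab
  · simp
  · simpa [div_self (sub_ne_zero.2 hab)] using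
      ((hf.comp_add_right b).comp_mul_left (c := a - b)).symm

end ConvexCombination

theorem integral_zero_one_le_of_le_rpow_combination {g : ℝ → ℝ} {s u v : ℝ} (hs : -1 < s)
    (hg : IntervalIntegrable g volume 0 1)
    (hle : ∀ t ∈ Icc (0:ℝ) 1, g t ≤ t ^ s * u + (1 - t) ^ s * v) :
    ∫ t in (0:ℝ)..1, g t ≤ u / (s + 1) + v / (s + 1) := by
  have hpow : IntervalIntegrable (fun t : ℝ => t ^ s) volume 0 1 :=
    intervalIntegral.intervalIntegrable_rpow' hs
  have hpow' : IntervalIntegrable (fun t : ℝ => (1 - t) ^ s) volume 0 1 := by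
    simpa using (hpow.comp_sub_left 1).symm
  calc ∫ t in (0:ℝ)..1, g t ≤ ∫ t in (0:ℝ)..1, (t ^ s * u + (1 - t) ^ s * v) :=
        intervalIntegral.integral_mono_on zero_le_one hg
          ((hpow.mul_const u).add (hpow'.mul_const v)) hle
    _ = u / (s + 1) + v / (s + 1) := by
        rw [intervalIntegral.integral_add (hpow.mul_const u) (hpow'.mul_const v),
          intervalIntegral.integral_mul_const, intervalIntegral.integral_mul_const,
          integral_rpow_zero_one hs, integral_one_sub_rpow_zero_one hs]
        ring

theorem s_convex_substitution_general (s : ℝ) (f : ℝ → ℝ) (a b : ℝ)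
    (hs : s ∈ Set.Ioc (0:ℝ) 1)
    (hconv : ∀ x ∈ Set.Ici (0:ℝ), ∀ y ∈ Set.Ici (0:ℝ), ∀ t ∈ Set.Icc (0:ℝ) 1,
      f (t * x + (1 - t) * y) ≤ t ^ s * f x + (1 - t) ^ s * f y)
    (ha : 0 ≤ a) (hab : a < b)
    (hfint : IntegrableOn f (Set.Icc a b)) :
    (∫ t in (0:ℝ)..1, f (t * a + (1 - t) * b)) = (1 / (b - a)) * ∫ x in a..b, f x ∧
    (1 / (b - a)) * ∫ x in a..b, f x ≤ f a / (s + 1) + f b / (s + 1) := by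
  have hmean :
      (∫ t in (0:ℝ)..1, f (t * a + (1 - t) * b)) = (1 / (b - a)) * ∫ x in a..b, f x := by
    rw [intervalIntegral.integral_comp_convexCombination f hab.ne, one_div, smul_eq_mul]
  refine ⟨hmean, hmean ▸ integral_zero_one_le_of_le_rpow_combination (by linarith [hs.1]) ?_ ?_⟩
  · exact ((intervalIntegrable_iff_integrableOn_Icc_of_le hab.le).2 hfint).comp_convexCombination
  · exact hconv a ha b (ha.trans hab.le)

theorem s_convex_substitution (s : ℝ) (f : ℝ → ℝ) (a b : ℝ)
    (hs : s ∈ Set.Ioc (0:ℝ) 1)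
    (hf : ∀ x ∈ Set.Ici (0:ℝ), 0 ≤ f x)
    (hconv : ∀ x ∈ Set.Ici (0:ℝ), ∀ y ∈ Set.Ici (0:ℝ), ∀ t ∈ Set.Icc (0:ℝ) 1,
      f (t * x + (1 - t) * y) ≤ t ^ s * f x + (1 - t) ^ s * f y)
    (ha : 0 ≤ a) (hab : a < b)
    (hfint : IntegrableOn f (Set.Icc a b)) :
    (∫ t in (0:ℝ)..1, f (t * a + (1 - t) * b)) = (1 / (b - a)) * ∫ x in a..b, f x ∧
    (1 / (b - a)) * ∫ x in a..b, f x ≤ f a / (s + 1) + f b / (s + 1) :=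
  s_convex_substitution_general s f a b hs hconv ha hab hfint
end
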